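/- If V > g > 0 and at least one of r1, r2 is strictly positive, then the N-player common-value all-pay auction with minimum bid g and revert penalties r1*g + r2*b on losing bids has no Nash equilibrium in pure strategies. -/
import Mathlib


open Classical in
/-- Payoff of agent `i` in the `N`-player common-value all-pay auction with value `V`,
minimum bid (base fee) `g`, and revert penalty rates `r1, r2`.  A strategy is `none`
(abstain) or `some x` (bid `x`).  The highest bidder(s) win, ties broken uniformly,
so a top bidder gets `(V - g - x)` with probability `1/k` (where `k` is the number of
tied top bids) and pays the revert cost otherwise; losers pay `r1*g + r2*x`. -/
noncomputable def payoff (N : ℕ) (V g r1 r2 : ℝ) (b : Fin N → Option ℝ) (i : Fin N) : ℝ :=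
  match b i with
  | none => 0
  | some x =>
    if ∀ j, ∀ y ∈ b j, y ≤ x then
      (V - g - x) * (1 / ((Finset.univ.filter fun j => b j = some x).card : ℝ))
        - (r1 * g + r2 * x) * (1 - 1 / ((Finset.univ.filter fun j => b j = some x).card : ℝ))
    else -(r1 * g + r2 * x)

/-- All submitted bids are nonnegative. -/
def ValidProfile (N : ℕ) (b : Fin N → Option ℝ) : Prop := ∀ i, ∀ x ∈ b i, (0:ℝ) ≤ x

/-- Nash equilibrium: no agent can strictly improve by a unilateral (valid) deviation. -/
def IsNash (N : ℕ) (V g r1 r2 : ℝ) (b : Fin N → Option ℝ) : Prop :=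
  ValidProfile N b ∧ ∀ i : Fin N, ∀ a : Option ℝ, (∀ x ∈ a, (0:ℝ) ≤ x) →
    payoff N V g r1 r2 (Function.update b i a) i ≤ payoff N V g r1 r2 b i

open Classical

lemma payoff_none' {N : ℕ} {V g r1 r2 : ℝ} {b : Fin N → Option ℝ} {i : Fin N}
    (h : b i = none) : payoff N V g r1 r2 b i = 0 := by
  simp [payoff, h]

lemma payoff_lose' {N : ℕ} {V g r1 r2 : ℝ} {b : Fin N → Option ℝ} {i : Fin N} {x : ℝ}
    (h : b i = some x) (hl : ¬ ∀ j, ∀ y ∈ b j, y ≤ x) :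
    payoff N V g r1 r2 b i = -(r1 * g + r2 * x) := by
  simp only [payoff, h]
  rw [if_neg hl]

lemma payoff_top' {N : ℕ} {V g r1 r2 : ℝ} {b : Fin N → Option ℝ} {i : Fin N} {x : ℝ}
    (h : b i = some x) (hw : ∀ j, ∀ y ∈ b j, y ≤ x) :
    payoff N V g r1 r2 b i =
      (V - g - x) * (1 / ((Finset.univ.filter fun j => b j = some x).card : ℝ))
        - (r1 * g + r2 * x) * (1 - 1 / ((Finset.univ.filter fun j => b j = some x).card : ℝ)) := by
  simp only [payoff, h]
  rw [if_pos hw]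

lemma payoff_sole' {N : ℕ} {V g r1 r2 : ℝ} {b : Fin N → Option ℝ} {i : Fin N} {x : ℝ}
    (h : b i = some x) (hlt : ∀ j, j ≠ i → ∀ y ∈ b j, y < x) :
    payoff N V g r1 r2 b i = V - g - x := by
  have hwin : ∀ j, ∀ y ∈ b j, y ≤ x := by
    intro j y hy
    rcases eq_or_ne j i with rfl | hj
    · rw [h] at hy; simp at hy; exact le_of_eq hy.symm
    · exact (hlt j hj y hy).le
  have hcard : (Finset.univ.filter fun j => b j = some x) = {i} := by
    ext j
    simp only [Finset.mem_filter, Finset.mem_univ, true_and, Finset.mem_singleton]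
    constructor
    · intro hj
      by_contra hne
      exact absurd (hlt j hne x (by simp [hj])) (lt_irrefl x)
    · rintro rfl; exact h
  rw [payoff_top' h hwin, hcard]
  norm_num

set_option maxHeartbeats 1000000 in
/-- If at least one revert penalty rate is strictly positive, the auction has no
pure-strategy Nash equilibrium. -/
theorem stmt1 (N : ℕ) (hN : 2 ≤ N) (V g r1 r2 : ℝ) (hg : 0 < g) (hVg : g < V)
    (hr1 : 0 ≤ r1) (hr1' : r1 ≤ 1) (hr2 : 0 ≤ r2) (hr2' : r2 ≤ 1)
    (hr : 0 < r1 ∨ 0 < r2) :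
    ¬ ∃ b : Fin N → Option ℝ, IsNash N V g r1 r2 b := by
  rintro ⟨b, hvalid, hnash⟩
  by_cases hall : ∀ j, b j = none
  · -- everyone abstains: agent 0 deviates to bidding 0
    set i : Fin N := ⟨0, by omega⟩ with hi
    have hd := hnash i (some 0) (by intro x hx; simp at hx; simp [hx])
    have h1 : payoff N V g r1 r2 (Function.update b i (some 0)) i = V - g - 0 := by
      apply payoff_sole' (by simp)
      intro j hj y hy
      rw [Function.update_of_ne hj, hall j] at hy
      simp at hy
    rw [h1, payoff_none' (hall i)] at hd
    linarith
  · push_neg at hall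
    obtain ⟨j0, hj0⟩ := hall
    set S : Finset (Fin N) := Finset.univ.filter (fun j => (b j).isSome) with hSdef
    have hS : S.Nonempty := ⟨j0, by simp [hSdef, Option.isSome_iff_ne_none, hj0]⟩
    obtain ⟨i, hiS, hmax⟩ := S.exists_max_image (fun j => (b j).getD 0) hS
    have hisome : (b i).isSome := (Finset.mem_filter.mp hiS).2
    obtain ⟨M, hM⟩ : ∃ M, b i = some M := Option.isSome_iff_exists.mp hisome
    have hM0 : (0:ℝ) ≤ M := hvalid i M hM
    have hMmax : ∀ j, ∀ y ∈ b j, y ≤ M := by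
      intro j y hy
      have hy' : b j = some y := hy
      have hjS : j ∈ S := by simp [hSdef, hy']
      have := hmax j hjS
      simpa [hy', hM] using this
    set c : ℝ := r1 * g + r2 * M with hc
    have hc0 : 0 ≤ c := by positivity
    set T : Finset (Fin N) := Finset.univ.filter (fun j => b j = some M) with hTdef
    have hiT : i ∈ T := Finset.mem_filter.mpr ⟨Finset.mem_univ i, hM⟩
    have hk1 : 1 ≤ T.card := Finset.card_pos.mpr ⟨i, hiT⟩
    have hpi : payoff N V g r1 r2 b i =
        (V - g - M) * (1 / (T.card : ℝ)) - c * (1 - 1 / (T.card : ℝ)) :=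
      payoff_top' hM hMmax
    have hkpos : (0:ℝ) < (T.card : ℝ) := by exact_mod_cast hk1
    by_cases hT2 : 2 ≤ T.card
    · -- tie at the top
      have hk2 : (2:ℝ) ≤ (T.card : ℝ) := by exact_mod_cast hT2
      have hinv : 1 / (T.card : ℝ) ≤ 1 / 2 := by
        rw [div_le_div_iff₀ hkpos (by norm_num)]; linarith
      have hinvpos : 0 < 1 / (T.card : ℝ) := by positivity
      by_cases hw : 0 < V - g - M
      · -- overbid slightly
        set x : ℝ := M + (V - g - M) / 4 with hx
        have hd := hnash i (some x) (by intro z hz; simp at hz; rw [← hz, hx]; linarith)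
        have h1 : payoff N V g r1 r2 (Function.update b i (some x)) i = V - g - x := by
          apply payoff_sole' (by simp)
          intro j hj y hy
          rw [Function.update_of_ne hj] at hy
          have := hMmax j y hy
          simp only [hx]; linarith
        rw [h1, hpi] at hd
        have h2 : (V - g - M) * (1 / (T.card : ℝ)) ≤ (V - g - M) * (1 / 2) :=
          mul_le_mul_of_nonneg_left hinv hw.le
        have h3 : 0 ≤ c * (1 - 1 / (T.card : ℝ)) := by nlinarith
        simp only [hx] at hd
        nlinarith
      · -- negative expected payoff: abstain
        push_neg at hw
        have hcpos : 0 < c := by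
          rcases hr with h | h
          · nlinarith
          · rcases eq_or_lt_of_le hM0 with hM0' | hM0'
            · exfalso; rw [← hM0'] at hw; linarith
            · nlinarith
        have hd := hnash i none (by intro z hz; simp at hz)
        rw [payoff_none' (by simp), hpi] at hd
        nlinarith [mul_nonneg (neg_nonneg.mpr hw) hinvpos.le]
    · -- unique top bidder i
      have hT1 : T.card = 1 := by omega
      have hTi : T = {i} := Finset.eq_singleton_iff_unique_mem.mpr
        ⟨hiT, fun j hj => by
          by_contra hne
          exact hne (Finset.card_le_one.mp (by omega) j hj i hiT)⟩
      have hpiV : payoff N V g r1 r2 b i = V - g - M := by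
        rw [hpi, hT1]; norm_num
      by_cases hpart : ∃ j, j ≠ i ∧ b j ≠ none
      · -- there is a loser
        obtain ⟨j, hji, hbj⟩ := hpart
        obtain ⟨y0, hy0⟩ : ∃ y, b j = some y := Option.ne_none_iff_exists'.mp hbj
        have hlose : ∀ j' y', j' ≠ i → b j' = some y' → y' < M := by
          intro j' y' hj'i hby'
          rcases lt_or_eq_of_le (hMmax j' y' hby') with h | h
          · exact h
          · exfalso
            apply hj'i
            have : j' ∈ T := Finset.mem_filter.mpr ⟨Finset.mem_univ _, by rw [hby', h]⟩
            rw [hTi] at this; simpa using this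
        by_cases hcase : ∃ j' y', j' ≠ i ∧ b j' = some y' ∧ 0 < r1 * g + r2 * y'
        · -- that loser abstains
          obtain ⟨j', y', hj'i, hby', hcy⟩ := hcase
          have hploss : payoff N V g r1 r2 b j' = -(r1 * g + r2 * y') := by
            apply payoff_lose' hby'
            push_neg
            exact ⟨i, M, hM, by have := hlose j' y' hj'i hby'; linarith⟩
          have hd := hnash j' none (by intro z hz; simp at hz)
          rw [payoff_none' (by simp), hploss] at hd
          linarith
        · -- all losers bid 0; winner lowers the bid
          push_neg at hcase
          have hr10 : r1 = 0 := by
            have := hcase j y0 hji hy0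
            have hy00 : 0 ≤ y0 := hvalid j y0 hy0
            nlinarith
          have hr2pos : 0 < r2 := by rcases hr with h | h; · rw [hr10] at h; linarith
                                     · exact h
          have hzero : ∀ j' y', j' ≠ i → b j' = some y' → y' = 0 := by
            intro j' y' hj'i hby'
            have h1 := hcase j' y' hj'i hby'
            have h2 : 0 ≤ y' := hvalid j' y' hby'
            nlinarith
          have hMpos : 0 < M := by
            have := hlose j y0 hji hy0
            have := hzero j y0 hji hy0
            linarith
          have hd := hnash i (some (M / 2)) (by intro z hz; simp at hz; rw [← hz]; positivity)
          have h1 : payoff N V g r1 r2 (Function.update b i (some (M / 2))) i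
              = V - g - M / 2 := by
            apply payoff_sole' (by simp)
            intro j' hj' y hy
            rw [Function.update_of_ne hj'] at hy
            have := hzero j' y hj' hy
            linarith
          rw [h1, hpiV] at hd
          linarith
      · push_neg at hpart
        by_cases hMpos : 0 < M
        · -- winner lowers to 0
          have hd := hnash i (some 0) (by intro z hz; simp at hz; simp [hz])
          have h1 : payoff N V g r1 r2 (Function.update b i (some 0)) i = V - g - 0 := by
            apply payoff_sole' (by simp)
            intro j hj y hy
            rw [Function.update_of_ne hj, hpart j hj] at hy
            simp at hy
          rw [h1, hpiV] at hd
          linarith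
        · -- M = 0; some abstainer enters above
          have hMeq : M = 0 := le_antisymm (not_lt.mp hMpos) hM0
          obtain ⟨j, hji⟩ := Fintype.exists_ne_of_one_lt_card (by simp; omega) i
          have hd := hnash j (some ((V - g) / 2))
            (by intro z hz; simp at hz; rw [← hz]; linarith)
          have h1 : payoff N V g r1 r2 (Function.update b j (some ((V - g) / 2))) j
              = V - g - (V - g) / 2 := by
            apply payoff_sole' (by simp)
            intro j' hj' y hy
            rw [Function.update_of_ne hj'] at hy
            rcases eq_or_ne j' i with rfl | hj'i
            · rw [hM] at hy
              have : y = M := by simpa using hy.symm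
              rw [this, hMeq]; linarith
            · rw [hpart j' hj'i] at hy; simp at hy
          rw [h1, payoff_none' (hpart j hji)] at hd
          linarith
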